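/- arXiv:2203.15474 — 2 statements merged into one kernel-verified Lean document; each statement's English description precedes it below -/
import Mathlib

section
/- Let h : ℝⁿ → ℝ be continuously differentiable, α : ℝ → ℝ locally Lipschitz with α(0) = 0 and strictly increasing, and let x : [0,T) → ℝⁿ be C¹ with d/dt h(x(t)) ≥ −α(h(x(t))) for all t. If h(x(0)) > 0 then h(x(t)) ≥ 0 for all t ∈ [0,T). -/
/-- Forward invariance under a general extended class-κ function α. -/
theorem stmt_4 {n : ℕ} (T : ℝ) (h : (Fin n → ℝ) → ℝ) (hh : ContDiff ℝ 1 h)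
    (α : ℝ → ℝ) (hαlip : LocallyLipschitz α) (hα0 : α 0 = 0) (hαmono : StrictMono α)
    (x : ℝ → (Fin n → ℝ)) (hx : ContDiff ℝ 1 (fun t => x t))
    (hineq : ∀ t ∈ Set.Ico (0 : ℝ) T, -α (h (x t)) ≤ deriv (fun s => h (x s)) t)
    (h0 : 0 < h (x 0)) :
    ∀ t ∈ Set.Ico (0 : ℝ) T, 0 ≤ h (x t) := by
  set y : ℝ → ℝ := fun s => h (x s) with hy_def
  have hy : ContDiff ℝ 1 y := hh.comp hx
  have hyc : Continuous y := hy.continuous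
  have hyd : Differentiable ℝ y := hy.differentiable one_ne_zero
  intro t ht
  by_contra hneg
  push_neg at hneg
  have ht0 : 0 < t := by
    rcases lt_or_eq_of_le ht.1 with h' | h'
    · exact h'
    · exact absurd h0 (by simpa [← h'] using hneg.not_gt.elim (by simp [hy_def, ← h'] at hneg; linarith))
  -- set of zeros in [0, t]
  set S : Set ℝ := {s ∈ Set.Icc 0 t | y s = 0} with hS_def
  have hSc : IsClosed S := (isClosed_Icc.inter (isClosed_eq hyc continuous_const))
  have hScomp : IsCompact S :=
    (isCompact_Icc.inter_right (isClosed_eq hyc continuous_const))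
  have hSne : S.Nonempty := by
    have hsub : Set.Icc (y t) (y 0) ⊆ y '' Set.Icc 0 t :=
      intermediate_value_Icc' ht0.le hyc.continuousOn
    have : (0 : ℝ) ∈ Set.Icc (y t) (y 0) := ⟨hneg.le, h0.le⟩
    rcases hsub this with ⟨c, hc, hc0⟩
    exact ⟨c, hc, hc0⟩
  set t₀ := sSup S with ht₀_def
  have ht₀S : t₀ ∈ S := hScomp.sSup_mem hSne
  have ht₀mem : t₀ ∈ Set.Icc 0 t := ht₀S.1
  have hyt₀ : y t₀ = 0 := ht₀S.2
  have ht₀lt : t₀ < t := by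
    rcases lt_or_eq_of_le ht₀mem.2 with h' | h'
    · exact h'
    · rw [h'] at hyt₀; linarith
  -- y < 0 on (t₀, t]
  have hylt : ∀ s ∈ Set.Ioc t₀ t, y s < 0 := by
    intro s hs
    rcases lt_trichotomy (y s) 0 with h' | h' | h'
    · exact h'
    · exact absurd (le_csSup hScomp.bddAbove ⟨⟨ht₀mem.1.trans hs.1.le, hs.2⟩, h'⟩)
        (not_le.mpr hs.1)
    · -- a zero between s and t
      have hsub : Set.Icc (y t) (y s) ⊆ y '' Set.Icc s t :=
        intermediate_value_Icc' hs.2 hyc.continuousOn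
      rcases hsub ⟨hneg.le, h'.le⟩ with ⟨c, hc, hc0⟩
      have : c ≤ t₀ := le_csSup hScomp.bddAbove
        ⟨⟨(ht₀mem.1.trans hs.1.le).trans hc.1, hc.2⟩, hc0⟩
      linarith [hs.1, hc.1]
  -- deriv nonneg on interior
  have hmono : MonotoneOn y (Set.Icc t₀ t) := by
    apply monotoneOn_of_deriv_nonneg (convex_Icc t₀ t) hyc.continuousOn
      (fun s _ => (hyd s).differentiableWithinAt)
    intro s hs
    rw [interior_Icc] at hs
    have hsneg : y s < 0 := hylt s ⟨hs.1, hs.2.le⟩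
    have hsT : s ∈ Set.Ico (0 : ℝ) T :=
      ⟨ht₀mem.1.trans hs.1.le, hs.2.trans ht.2⟩
    have hαneg : α (y s) < 0 := by
      have := hαmono hsneg
      rwa [hα0] at this
    have := hineq s hsT
    simp only [hy_def] at this ⊢
    linarith
  have := hmono ⟨le_refl t₀, ht₀lt.le⟩ ⟨ht₀lt.le, le_refl t⟩ ht₀lt.le
  rw [hyt₀] at this
  linarith
end

section
/- Let h : ℝ² → ℝ be C², ψ₀ = h, ψ₁ = ḣ + k₀h along trajectories of the double integrator with control u, and suppose ḧ + k₁ḣ + k₀k₁h ≥ 0 is enforced for all t with constants k₀, k₁ > 0. If ψ₁(0) ≥ 0 and h(0) ≥ 0, then h(t) ≥ 0 for all t ≥ 0. -/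
lemma comparison_nonneg (f : ℝ → ℝ) (hf : Differentiable ℝ f) (K : ℝ)
    (hineq : ∀ t ≥ (0 : ℝ), 0 ≤ deriv f t + K * f t) (h0 : 0 ≤ f 0) :
    ∀ t ≥ (0 : ℝ), 0 ≤ f t := by
  intro t ht
  set g : ℝ → ℝ := fun s => Real.exp (K * s) * f s with hg
  have hgd : ∀ s, HasDerivAt g (Real.exp (K * s) * (deriv f s + K * f s)) s := by
    intro s
    have h1 : HasDerivAt (fun s : ℝ => Real.exp (K * s)) (Real.exp (K * s) * K) s := by
      have := (Real.hasDerivAt_exp (K * s)).comp s ((hasDerivAt_id s).const_mul K)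
      simpa [Function.comp_def] using this
    have h2 : HasDerivAt f (deriv f s) s := (hf s).hasDerivAt
    have := h1.fun_mul h2
    exact this.congr_deriv (by ring)
  have hmono : MonotoneOn g (Set.Ici (0 : ℝ)) := by
    apply monotoneOn_of_deriv_nonneg (convex_Ici 0)
    · exact (Real.continuous_exp.comp (continuous_const.mul continuous_id)).mul
        hf.continuous |>.continuousOn
    · intro s hs
      exact (hgd s).differentiableAt.differentiableWithinAt
    · intro s hs
      rw [interior_Ici] at hs
      rw [(hgd s).deriv]
      exact mul_nonneg (Real.exp_nonneg _) (hineq s hs.le)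
  have hgt : g 0 ≤ g t := hmono (Set.self_mem_Ici) ht ht
  have hg0 : g 0 = f 0 := by simp [hg]
  have : 0 ≤ g t := le_trans (hg0 ▸ h0) hgt
  have hexp : 0 < Real.exp (K * t) := Real.exp_pos _
  exact nonneg_of_mul_nonneg_right (by simpa [hg] using this) hexp

/-- Exponential CBF forward invariance for relative degree 2: chaining two
first-order comparison lemmas through ψ₁ = ḣ + k₀ h. -/
theorem stmt_15 (h : ℝ × ℝ → ℝ) (hh : ContDiff ℝ 2 h)
    (r v u : ℝ → ℝ) (hr : ∀ t, HasDerivAt r (v t) t) (hv : ∀ t, HasDerivAt v (u t) t)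
    (φ : ℝ → ℝ) (hφdef : ∀ t, φ t = h (r t, v t)) (hφ : ContDiff ℝ 2 φ)
    (k₀ k₁ : ℝ) (hk₀ : 0 < k₀) (hk₁ : 0 < k₁)
    (hineq : ∀ t ≥ (0 : ℝ),
        0 ≤ deriv (deriv φ) t + (k₀ + k₁) * deriv φ t + k₀ * k₁ * φ t)
    (hψ : 0 ≤ deriv φ 0 + k₀ * φ 0) (h0 : 0 ≤ φ 0) :
    ∀ t ≥ (0 : ℝ), 0 ≤ φ t := by
  have hφ2 : ContDiff ℝ ((1 : ℕ∞) + 1) φ := by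
    convert hφ using 2
    norm_num
  have hd := (contDiff_succ_iff_deriv.mp hφ2)
  have hφdiff : Differentiable ℝ φ := hd.1
  have hdφdiff : Differentiable ℝ (deriv φ) := hd.2.2.differentiable (by norm_num)
  set ψ : ℝ → ℝ := fun t => deriv φ t + k₀ * φ t with hψdef
  have hψdiff : Differentiable ℝ ψ := hdφdiff.add (hφdiff.const_mul k₀)
  have hψderiv : ∀ t, deriv ψ t = deriv (deriv φ) t + k₀ * deriv φ t := by
    intro t
    rw [hψdef]
    rw [deriv_fun_add (hdφdiff t) ((hφdiff t).const_mul k₀), deriv_const_mul k₀ (hφdiff t)]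
  have hψnonneg : ∀ t ≥ (0 : ℝ), 0 ≤ ψ t := by
    apply comparison_nonneg ψ hψdiff k₁ _ hψ
    intro t ht
    rw [hψderiv t]
    have := hineq t ht
    simp only [hψdef]
    nlinarith [this]
  apply comparison_nonneg φ hφdiff k₀ _ h0
  intro t ht
  exact hψnonneg t ht
end
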